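/- arXiv:1303.4673 — 3 statements merged into one kernel-verified Lean document; each statement's English description precedes it below -/
import Mathlib

section
/- Any geometric graph on n vertices (points in general position, edges as straight-line segments) with n+1 edges contains two disjoint edges (edges that neither share an endpoint nor cross). -/
open scoped Classical

abbrev Pt : Type := ℝ × ℝ

/-- No three distinct points of `S` are collinear. -/
def GenPos (S : Finset Pt) : Prop :=
  ∀ p ∈ S, ∀ q ∈ S, ∀ r ∈ S, p ≠ q → q ≠ r → p ≠ r → ¬ Collinear ℝ ({p, q, r} : Set Pt)

/-- The closed straight-line segment of an (unordered) edge. -/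
noncomputable def seg2 : Sym2 Pt → Set Pt :=
  Sym2.lift ⟨fun p q => segment ℝ p q, fun p q => segment_symm ℝ p q⟩

/-- Two edges intersect: they share a point (common endpoint or crossing). -/
def SInter (e f : Sym2 Pt) : Prop := (seg2 e ∩ seg2 f).Nonempty

/-- A geometric graph: vertices in general position, straight-line edges. -/
structure GeomGraph where
  verts : Finset Pt
  edges : Finset (Sym2 Pt)
  genpos : GenPos verts
  edge_mem : ∀ e ∈ edges, ∀ p ∈ e, p ∈ verts
  edge_ne : ∀ e ∈ edges, ¬ e.IsDiag

/-- A coloring is complete on edge set `E` if every pair of used colors appears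
on a pair of intersecting edges. -/
def CompleteOn (E : Finset (Sym2 Pt)) (c : Sym2 Pt → ℕ) : Prop :=
  ∀ i ∈ E.image c, ∀ j ∈ E.image c, i ≠ j →
    ∃ e ∈ E, ∃ f ∈ E, c e = i ∧ c f = j ∧ SInter e f

/-- A coloring is proper if same-colored edges are disjoint. -/
def ProperOn (E : Finset (Sym2 Pt)) (c : Sym2 Pt → ℕ) : Prop :=
  ∀ e ∈ E, ∀ f ∈ E, e ≠ f → c e = c f → ¬ SInter e f

/-- Points in convex position. -/
def ConvexPos (S : Finset Pt) : Prop :=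
  ∀ p ∈ S, p ∉ convexHull ℝ ((S : Set Pt) \ {p})

/-- Edge set of the complete geometric graph on `S`. -/
noncomputable def edgeSet (S : Finset Pt) : Finset (Sym2 Pt) :=
  S.sym2.filter (fun e => ¬ e.IsDiag)

def ShareEndpoint (e f : Sym2 Pt) : Prop := ∃ p : Pt, p ∈ e ∧ p ∈ f

def Crossing (e f : Sym2 Pt) : Prop := SInter e f ∧ ¬ ShareEndpoint e f

/-- Number of unordered pairs of distinct edges of `E` satisfying the
(symmetric) relation `P`. -/
noncomputable def pairCount (E : Finset (Sym2 Pt)) (P : Sym2 Pt → Sym2 Pt → Prop) : ℕ :=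
  ((E ×ˢ E).filter (fun q => q.1 ≠ q.2 ∧ P q.1 q.2)).card / 2

/-- The `k`-th vertex (clockwise) of the regular `n`-gon. -/
noncomputable def pt (n k : ℕ) : Pt :=
  (Real.cos (2 * Real.pi * k / n), -Real.sin (2 * Real.pi * k / n))

/-- Vertex set of the regular `n`-gon. -/
noncomputable def ngon (n : ℕ) : Finset Pt := (Finset.range n).image (pt n)

/-- `pq` is a halving edge of `S`: each open half-plane bounded by the line
through `p` and `q` contains at least `⌊(n-2)/2⌋` points of `S`. -/
def IsHalvingPts (S : Finset Pt) (p q : Pt) : Prop :=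
  (S.card - 2) / 2 ≤ (S.filter (fun r =>
      0 < (q.1 - p.1) * (r.2 - p.2) - (q.2 - p.2) * (r.1 - p.1))).card ∧
  (S.card - 2) / 2 ≤ (S.filter (fun r =>
      (q.1 - p.1) * (r.2 - p.2) - (q.2 - p.2) * (r.1 - p.1) < 0)).card

/-- The edge `e_{i,j}` of the regular `n`-gon is halving. -/
def Halving (n i j : ℕ) : Prop := IsHalvingPts (ngon n) (pt n i) (pt n j)

/-- The edges `e_{i,j}` and `e_{i',j'}` of the regular `n`-gon intersect. -/
def EInter (n i j i' j' : ℕ) : Prop :=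
  (segment ℝ (pt n i) (pt n j) ∩ segment ℝ (pt n i') (pt n j')).Nonempty

/-- `(e_{i,j}, e_{j+1,k})` is a halving pair. -/
def HalvingPair (n i j k : ℕ) : Prop :=
  pt n i ≠ pt n j ∧ pt n (j + 1) ≠ pt n k ∧ ¬ EInter n i j (j + 1) k ∧
  (Halving n i (j + 1) ∨ Halving n i k ∨ Halving n j k)

/-!
If no two edges are disjoint, then at every edge `uv` one endpoint, say `u`, sees all its other
neighbours strictly on the left of the directed line `u → v`: otherwise a neighbour `a` of `u` on
the right and a neighbour `b` of `v` on the left give edges `ua` and `vb` separated by the line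
`uv`, hence disjoint. Charging each edge to such an endpoint is injective, since two edges `uw`,
`uw'` charged to `u` would put `w'` left of `u → w` and `w` left of `u → w'`. Hence there are at
most as many edges as vertices.
-/

/-- Twice the signed area of the triangle `pqr`: positive iff `r` lies left of the line `p → q`. -/
noncomputable def orient (p q r : Pt) : ℝ :=
  (q.1 - p.1) * (r.2 - p.2) - (q.2 - p.2) * (r.1 - p.1)

lemma orient_swap_right (p q r : Pt) : orient p r q = -orient p q r := by
  simp only [orient]; ring

lemma orient_swap_left (p q r : Pt) : orient q p r = -orient p q r := by
  simp only [orient]; ring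

lemma orient_lineMap (p q x y : Pt) (t : ℝ) :
    orient p q (AffineMap.lineMap x y t) = (1 - t) * orient p q x + t * orient p q y := by
  simp only [orient, AffineMap.lineMap_apply_module, Prod.fst_add, Prod.snd_add, Prod.smul_fst,
    Prod.smul_snd, smul_eq_mul]
  ring

lemma collinear_of_orient_eq_zero {p q r : Pt} (hpq : p ≠ q) (h : orient p q r = 0) :
    Collinear ℝ ({p, q, r} : Set Pt) := by
  set d := q - p
  have hd : 0 < d.1 ^ 2 + d.2 ^ 2 := by
    by_contra! hle
    refine sub_ne_zero.2 hpq.symm (Prod.ext ?_ ?_) <;>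
      simp only [Prod.fst_zero, Prod.snd_zero] <;> nlinarith [sq_nonneg d.1, sq_nonneg d.2]
  rw [collinear_iff_of_mem (Set.mem_insert p _)]
  refine ⟨d, ?_⟩
  simp only [Set.mem_insert_iff, Set.mem_singleton_iff, forall_eq_or_imp, forall_eq]
  refine ⟨⟨0, by simp⟩, ⟨1, by simp [d]⟩, ?_⟩
  -- The projection coefficient of `r - p` on `d` works, as the normal component is `orient p q r`.
  refine ⟨((r.1 - p.1) * d.1 + (r.2 - p.2) * d.2) / (d.1 ^ 2 + d.2 ^ 2), Prod.ext ?_ ?_⟩ <;>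
    simp only [orient, d, vadd_eq_add, Prod.fst_add, Prod.snd_add, Prod.smul_fst, Prod.smul_snd,
      smul_eq_mul, Prod.fst_sub, Prod.snd_sub] at h hd ⊢ <;>
    field_simp
  · linear_combination -(q.2 - p.2) * h
  · linear_combination (q.1 - p.1) * h

lemma GenPos.orient_ne_zero {S : Finset Pt} (hS : GenPos S) {p q r : Pt} (hp : p ∈ S)
    (hq : q ∈ S) (hr : r ∈ S) (hpq : p ≠ q) (hqr : q ≠ r) (hpr : p ≠ r) : orient p q r ≠ 0 :=
  fun h => hS p hp q hq r hr hpq hqr hpr (collinear_of_orient_eq_zero hpq h)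

lemma not_sInter_of_orient_neg_pos {u v a b : Pt} (huv : u ≠ v)
    (ha : orient u v a < 0) (hb : 0 < orient u v b) : ¬ SInter s(u, a) s(v, b) := by
  rintro ⟨p, hpa, hpb⟩
  simp only [seg2, Sym2.lift_mk, segment_eq_image_lineMap] at hpa hpb
  obtain ⟨t, ⟨ht, -⟩, rfl⟩ := hpa
  obtain ⟨s, ⟨hs, -⟩, hst⟩ := hpb
  have horient := congrArg (orient u v) hst
  simp only [orient_lineMap] at horient
  have hu : orient u v u = 0 := by simp only [orient]; ring
  have hv : orient u v v = 0 := by simp only [orient]; ring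
  rw [hu, hv] at horient
  have ht0 : t = 0 := by nlinarith
  have hs0 : s = 0 := by nlinarith
  simp only [ht0, hs0, AffineMap.lineMap_apply_zero] at hst
  exact huv hst.symm

namespace GeomGraph

variable (G : GeomGraph)

lemma mem_verts_of_mk_mem {u v : Pt} (h : s(u, v) ∈ G.edges) :
    u ∈ G.verts ∧ v ∈ G.verts ∧ u ≠ v :=
  ⟨G.edge_mem _ h u (Sym2.mem_mk_left u v), G.edge_mem _ h v (Sym2.mem_mk_right u v),
    fun huv => G.edge_ne _ h (Sym2.mk_isDiag_iff.2 huv)⟩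

def LeftExtreme (u v : Pt) : Prop :=
  ∀ x, s(u, x) ∈ G.edges → x ≠ v → 0 < orient u v x

variable {G}

lemma LeftExtreme.unique {u w w' : Pt} (h : G.LeftExtreme u w) (h' : G.LeftExtreme u w')
    (hw : s(u, w) ∈ G.edges) (hw' : s(u, w') ∈ G.edges) : w = w' := by
  by_contra hne
  have hw'_left := h w' hw' (Ne.symm hne)
  have hw_left := h' w hw hne
  rw [orient_swap_right] at hw_left
  linarith

lemma leftExtreme_or_leftExtreme (hinter : ∀ e ∈ G.edges, ∀ f ∈ G.edges, e ≠ f → SInter e f)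
    {u v : Pt} (huv : s(u, v) ∈ G.edges) : G.LeftExtreme u v ∨ G.LeftExtreme v u := by
  obtain ⟨hu, hv, hne⟩ := G.mem_verts_of_mk_mem huv
  by_contra! ⟨hnu, hnv⟩
  simp only [LeftExtreme, not_forall, not_lt] at hnu hnv
  obtain ⟨a, hua, hav, ha⟩ := hnu
  obtain ⟨b, hvb, hbu, hb⟩ := hnv
  obtain ⟨-, ha', hua'⟩ := G.mem_verts_of_mk_mem hua
  obtain ⟨-, hb', hvb'⟩ := G.mem_verts_of_mk_mem hvb
  have ha_neg : orient u v a < 0 :=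
    ha.lt_of_ne (G.genpos.orient_ne_zero hu hv ha' hne (Ne.symm hav) hua')
  have hb_pos : 0 < orient u v b := by
    rw [orient_swap_left] at hb
    exact (neg_nonpos.1 hb).lt_of_ne' (G.genpos.orient_ne_zero hu hv hb' hne hvb' (Ne.symm hbu))
  have hdistinct : s(u, a) ≠ s(v, b) := by
    rw [Ne, Sym2.eq_iff]
    rintro (⟨h, -⟩ | ⟨-, h⟩)
    exacts [hne h, hav h]
  exact not_sInter_of_orient_neg_pos hne ha_neg hb_pos (hinter _ hua _ hvb hdistinct)

lemma card_edges_le_of_pairwise_sInter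
    (hinter : ∀ e ∈ G.edges, ∀ f ∈ G.edges, e ≠ f → SInter e f) :
    G.edges.card ≤ G.verts.card := by
  refine Finset.card_le_card_of_forall_subsingleton
    (fun e u => ∃ w, e = s(u, w) ∧ G.LeftExtreme u w) (fun e he => ?_) ?_
  · induction e using Sym2.ind with
    | h u v =>
      rcases leftExtreme_or_leftExtreme hinter he with h | h
      · exact ⟨u, (G.mem_verts_of_mk_mem he).1, v, rfl, h⟩
      · exact ⟨v, (G.mem_verts_of_mk_mem he).2.1, u, Sym2.eq_swap, h⟩
  · rintro u - e ⟨he, w, rfl, hw⟩ e' ⟨he', w', rfl, hw'⟩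
    rw [hw.unique hw' he he']

end GeomGraph

/-- Any geometric graph on `n` vertices with `n+1` edges contains two disjoint edges. -/
theorem erdos_disjoint_edges (G : GeomGraph) (n : ℕ)
    (hn : G.verts.card = n) (he : G.edges.card = n + 1) :
    ∃ e ∈ G.edges, ∃ f ∈ G.edges, e ≠ f ∧ ¬ SInter e f := by
  by_contra! hinter
  have := G.card_edges_le_of_pairwise_sInter hinter
  omega
end

section
/- In a complete convex geometric graph of order n, any halving edge intersects any halving pair of edges, and any two halving pairs intersect (there is an edge of one pair intersecting an edge of the other). -/
open scoped Classical

/-!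
Label the vertices in clockwise order. Since they are in convex position, whether two edges meet
depends only on the cyclic order of the labels: they meet iff they share an endpoint or their
endpoints alternate around the polygon, and an edge is halving iff both arcs between its endpoints
contain at least `⌊(n-2)/2⌋` vertices. Two halving edges therefore always meet.

In a halving pair `(e_{i,j}, e_{j+1,k})` the vertices `i, j, j+1, k` are in cyclic order and
`j, j+1` are consecutive, so an edge missing both edges of the pair lies in one of the arcs cut out
by these four vertices and misses the witness. Hence a halving edge, which meets the witness,
meets the pair. For two halving pairs, the witness of the first meets an edge of the second, and
that edge then meets the first pair.
-/

open Finset Real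

noncomputable def cross (P Q R : Pt) : ℝ := (Q.1 - P.1) * (R.2 - P.2) - (Q.2 - P.2) * (R.1 - P.1)

theorem cross_swap12 (P Q R : Pt) : cross Q P R = -cross P Q R := by unfold cross; ring

theorem cross_swap23 (P Q R : Pt) : cross P R Q = -cross P Q R := by unfold cross; ring

theorem cross_rotate (P Q R : Pt) : cross Q R P = cross P Q R := by unfold cross; ring

theorem cross_self_left (P Q : Pt) : cross P P Q = 0 := by unfold cross; ring

theorem cross_self_outer (P Q : Pt) : cross P Q P = 0 := by unfold cross; ring

theorem cross_self_right (P Q : Pt) : cross P Q Q = 0 := by unfold cross; ring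

theorem cross_convexComb (P Q X Y : Pt) {u v : ℝ} (huv : u + v = 1) :
    cross P Q (u • X + v • Y) = u * cross P Q X + v * cross P Q Y := by
  obtain rfl : v = 1 - u := by linarith
  simp only [cross, Prod.fst_add, Prod.snd_add, Prod.smul_fst, Prod.smul_snd, smul_eq_mul]
  ring

theorem cross_eq_zero_of_mem_segment {P Q X : Pt} (hX : X ∈ segment ℝ P Q) :
    cross P Q X = 0 := by
  obtain ⟨u, v, -, -, huv, rfl⟩ := hX
  rw [cross_convexComb P Q P Q huv, cross_self_outer, cross_self_right]
  ring

theorem div_sub_mem_Icc_of_mul_neg {x y : ℝ} (h : x * y < 0) : x / (x - y) ∈ Set.Icc 0 1 := by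
  rcases mul_neg_iff.1 h with ⟨hx, hy⟩ | ⟨hx, hy⟩
  · exact ⟨div_nonneg hx.le (by linarith), (div_le_one (by linarith)).2 (by linarith)⟩
  · exact ⟨div_nonneg_of_nonpos hx.le (by linarith),
      (div_le_one_of_neg (by linarith)).2 (by linarith)⟩

theorem segment_inter_nonempty_of_cross_mul_neg {A B C D : Pt}
    (hAB : cross A B C * cross A B D < 0) (hCD : cross C D A * cross C D B < 0) :
    (segment ℝ A B ∩ segment ℝ C D).Nonempty := by
  have hsum : cross C D A - cross C D B = -(cross A B C - cross A B D) := by unfold cross; ring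
  have hne : cross A B C - cross A B D ≠ 0 := by
    intro h; rw [h, neg_zero, sub_eq_zero] at hsum; rw [hsum] at hCD; nlinarith
  -- the cross product is affine along each segment; `s` and `t` are where it vanishes
  set s := cross C D A / (cross C D A - cross C D B)
  set t := cross A B C / (cross A B C - cross A B D)
  have hst : AffineMap.lineMap A B s = AffineMap.lineMap C D t := by
    simp only [s, t, hsum, AffineMap.lineMap_apply_module]
    ext <;> simp only [Prod.fst_add, Prod.snd_add, Prod.smul_fst, Prod.smul_snd, smul_eq_mul] <;>
      field_simp <;> unfold cross <;> ring
  exact ⟨_, lineMap_mem_segment ℝ A B (div_sub_mem_Icc_of_mul_neg hCD),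
    hst ▸ lineMap_mem_segment ℝ C D (div_sub_mem_Icc_of_mul_neg hAB)⟩

theorem not_nonempty_segment_inter_of_cross_mul_pos {A B C D : Pt}
    (h : 0 < cross A B C * cross A B D) : ¬ (segment ℝ A B ∩ segment ℝ C D).Nonempty := by
  rintro ⟨X, hXAB, u, v, hu, hv, huv, rfl⟩
  have hX := cross_eq_zero_of_mem_segment hXAB
  rw [cross_convexComb A B C D huv] at hX
  rcases mul_pos_iff.1 h with ⟨hC, hD⟩ | ⟨hC, hD⟩
  · nlinarith [mul_nonneg hu hC.le, mul_nonneg hv hD.le]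
  · nlinarith [mul_nonneg hu (neg_nonneg.2 hC.le), mul_nonneg hv (neg_nonneg.2 hD.le)]

/-- Labels are compared linearly: cutting the cycle anywhere, two chords with distinct endpoints
cross iff exactly one endpoint of one lies strictly between the endpoints of the other. -/
def ChordsMeet (a b c d : ℕ) : Prop :=
  a = c ∨ a = d ∨ b = c ∨ b = d ∨ ¬(c ∈ Set.uIoo a b ↔ d ∈ Set.uIoo a b)

theorem chordsMeet_comm_left {a b c d : ℕ} : ChordsMeet b a c d ↔ ChordsMeet a b c d := by
  simp only [ChordsMeet, Set.uIoo_comm b a]; tauto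

theorem chordsMeet_comm_right {a b c d : ℕ} : ChordsMeet a b d c ↔ ChordsMeet a b c d := by
  simp only [ChordsMeet]; tauto

/-- The two open arcs between `a` and `b` contain `a.dist b - 1` and `n - 1 - a.dist b` labels. -/
def IsHalvingChord (n a b : ℕ) : Prop := (n - 2) / 2 < a.dist b ∧ a.dist b + (n - 2) / 2 < n

theorem isHalvingPts_iff_cross (S : Finset Pt) (P Q : Pt) :
    IsHalvingPts S P Q ↔ (#S - 2) / 2 ≤ #{r ∈ S | 0 < cross P Q r} ∧
      (#S - 2) / 2 ≤ #{r ∈ S | cross P Q r < 0} :=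
  Iff.rfl

theorem isHalvingPts_comm (S : Finset Pt) (P Q : Pt) :
    IsHalvingPts S Q P ↔ IsHalvingPts S P Q := by
  simp only [isHalvingPts_iff_cross, cross_swap12 P Q, neg_pos, neg_lt_zero]
  exact and_comm

def IsClockwise (n : ℕ) (p : ℕ → Pt) : Prop :=
  ∀ ⦃i j k : ℕ⦄, i < j → j < k → k < n → cross (p i) (p j) (p k) < 0

namespace IsClockwise

variable {n : ℕ} {p : ℕ → Pt} {a b c d : ℕ}

theorem cross_pos_iff (hp : IsClockwise n p) (hab : a < b) (hb : b < n) (hc : c < n) :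
    0 < cross (p a) (p b) (p c) ↔ a < c ∧ c < b := by
  rcases lt_trichotomy c a with hca | rfl | hac
  · have := hp hca hab hb
    rw [← cross_rotate] at this
    exact iff_of_false (by linarith) (by omega)
  · exact iff_of_false (by rw [cross_self_outer]; simp) (by omega)
  rcases lt_trichotomy c b with hcb | rfl | hbc
  · have := hp hac hcb hb
    rw [cross_swap23] at this
    exact iff_of_true (by linarith) ⟨hac, hcb⟩
  · exact iff_of_false (by rw [cross_self_right]; simp) (by omega)
  · exact iff_of_false (hp hab hbc hc).not_gt (by omega)

theorem cross_neg_iff (hp : IsClockwise n p) (hab : a < b) (hb : b < n) (hc : c < n) :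
    cross (p a) (p b) (p c) < 0 ↔ c < a ∨ b < c := by
  rcases lt_trichotomy c a with hca | rfl | hac
  · have := hp hca hab hb
    rw [← cross_rotate] at this
    exact iff_of_true this (Or.inl hca)
  · exact iff_of_false (by rw [cross_self_outer]; simp) (by omega)
  rcases lt_trichotomy c b with hcb | rfl | hbc
  · have := hp hac hcb hb
    rw [cross_swap23] at this
    exact iff_of_false (by linarith) (by omega)
  · exact iff_of_false (by rw [cross_self_right]; simp) (by omega)
  · exact iff_of_true (hp hab hbc hc) (Or.inr hbc)

theorem injOn (hp : IsClockwise n p) (hn : 3 ≤ n) : Set.InjOn p (range n) := by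
  have key : ∀ {a b}, a < b → b < n → p a ≠ p b := by
    intro a b hab hb hpab
    obtain ⟨c, hc, hca, hcb⟩ : ∃ c < 3, c ≠ a ∧ c ≠ b := by
      by_cases h0 : a = 0 <;> by_cases h1 : b = 1
      exacts [⟨2, by omega⟩, ⟨1, by omega⟩, ⟨0, by omega⟩, ⟨0, by omega⟩]
    have hpos := hp.cross_pos_iff hab hb (by omega : c < n)
    have hneg := hp.cross_neg_iff hab hb (by omega : c < n)
    rw [hpab, cross_self_left, lt_self_iff_false, false_iff] at hpos hneg
    omega
  intro a ha b hb hpab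
  simp only [coe_range, Set.mem_Iio] at ha hb
  by_contra hne
  rcases Nat.lt_or_gt_of_ne hne with h | h
  exacts [key h hb hpab, key h ha hpab.symm]

theorem segment_inter_nonempty_iff_of_lt (hp : IsClockwise n p) (hab : a < b) (hb : b < n)
    (hcd : c < d) (hd : d < n) :
    (segment ℝ (p a) (p b) ∩ segment ℝ (p c) (p d)).Nonempty ↔ ChordsMeet a b c d := by
  have ha : a < n := by omega
  have hc : c < n := by omega
  rw [ChordsMeet, Set.uIoo_of_lt hab, Set.mem_Ioo, Set.mem_Ioo]
  constructor
  · intro h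
    by_contra hmeet
    refine not_nonempty_segment_inter_of_cross_mul_pos ?_ h
    rw [mul_pos_iff, hp.cross_pos_iff hab hb hc, hp.cross_neg_iff hab hb hc,
      hp.cross_pos_iff hab hb hd, hp.cross_neg_iff hab hb hd]
    omega
  intro hmeet
  by_cases hshare : a = c ∨ a = d ∨ b = c ∨ b = d
  · rcases hshare with rfl | rfl | rfl | rfl
    exacts [⟨p a, left_mem_segment ℝ _ _, left_mem_segment ℝ _ _⟩,
      ⟨p a, left_mem_segment ℝ _ _, right_mem_segment ℝ _ _⟩,
      ⟨p b, right_mem_segment ℝ _ _, left_mem_segment ℝ _ _⟩,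
      ⟨p b, right_mem_segment ℝ _ _, right_mem_segment ℝ _ _⟩]
  apply segment_inter_nonempty_of_cross_mul_neg
  · rw [mul_neg_iff, hp.cross_pos_iff hab hb hc, hp.cross_neg_iff hab hb hc,
      hp.cross_pos_iff hab hb hd, hp.cross_neg_iff hab hb hd]
    omega
  · rw [mul_neg_iff, hp.cross_pos_iff hcd hd ha, hp.cross_neg_iff hcd hd ha,
      hp.cross_pos_iff hcd hd hb, hp.cross_neg_iff hcd hd hb]
    omega

theorem segment_inter_nonempty_iff (hp : IsClockwise n p) (ha : a < n) (hb : b < n) (hc : c < n)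
    (hd : d < n) (hab : a ≠ b) (hcd : c ≠ d) :
    (segment ℝ (p a) (p b) ∩ segment ℝ (p c) (p d)).Nonempty ↔ ChordsMeet a b c d := by
  rcases Nat.lt_or_gt_of_ne hab with hab | hab <;> rcases Nat.lt_or_gt_of_ne hcd with hcd | hcd
  · exact hp.segment_inter_nonempty_iff_of_lt hab hb hcd hd
  · rw [segment_symm ℝ (p c), ← chordsMeet_comm_right]
    exact hp.segment_inter_nonempty_iff_of_lt hab hb hcd hc
  · rw [segment_symm ℝ (p a), ← chordsMeet_comm_left]
    exact hp.segment_inter_nonempty_iff_of_lt hab ha hcd hd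
  · rw [segment_symm ℝ (p a), segment_symm ℝ (p c), ← chordsMeet_comm_left,
      ← chordsMeet_comm_right]
    exact hp.segment_inter_nonempty_iff_of_lt hab ha hcd hc

theorem isHalvingPts_iff_of_lt (hp : IsClockwise n p) (hn : 3 ≤ n) (hab : a < b) (hb : b < n) :
    IsHalvingPts ((range n).image p) (p a) (p b) ↔
      (n - 2) / 2 < b - a ∧ b - a + (n - 2) / 2 < n := by
  have hinj := hp.injOn hn
  have hcard (q : Pt → Prop) : #{r ∈ (range n).image p | q r} = #{k ∈ range n | q (p k)} := by
    rw [filter_image, card_image_of_injOn (hinj.mono (coe_subset.2 (filter_subset _ _)))]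
  have hpos : {k ∈ range n | 0 < cross (p a) (p b) (p k)} = Ioo a b := by
    ext k
    simp only [mem_filter, mem_range, mem_Ioo]
    constructor
    · rintro ⟨hk, h⟩; exact (hp.cross_pos_iff hab hb hk).1 h
    · rintro h; exact ⟨by omega, (hp.cross_pos_iff hab hb (by omega)).2 h⟩
  have hneg : {k ∈ range n | cross (p a) (p b) (p k) < 0} = range n \ Icc a b := by
    ext k
    simp only [mem_filter, mem_range, mem_sdiff, mem_Icc]
    constructor
    · rintro ⟨hk, h⟩; have := (hp.cross_neg_iff hab hb hk).1 h; omega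
    · rintro ⟨hk, h⟩; exact ⟨hk, (hp.cross_neg_iff hab hb hk).2 (by omega)⟩
  have hsub : Icc a b ⊆ range n := fun k hk => by simp only [mem_Icc, mem_range] at hk ⊢; omega
  rw [isHalvingPts_iff_cross, hcard, hcard, hpos, hneg, card_image_of_injOn hinj, card_range,
    Nat.card_Ioo, card_sdiff_of_subset hsub, card_range, Nat.card_Icc]
  omega

theorem isHalvingPts_iff (hp : IsClockwise n p) (hn : 3 ≤ n) (ha : a < n) (hb : b < n)
    (hab : a ≠ b) :
    IsHalvingPts ((range n).image p) (p a) (p b) ↔ IsHalvingChord n a b := by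
  rcases Nat.lt_or_gt_of_ne hab with h | h
  · rw [hp.isHalvingPts_iff_of_lt hn h hb, IsHalvingChord, Nat.dist_eq_sub_of_le h.le]
  · rw [← isHalvingPts_comm, hp.isHalvingPts_iff_of_lt hn h ha, IsHalvingChord,
      Nat.dist_eq_sub_of_le_right h.le]

end IsClockwise

theorem sin_two_mul_add_sin_two_mul_sub (u v : ℝ) :
    sin (2 * u) + sin (2 * v) - sin (2 * u + 2 * v) = 4 * sin (u + v) * sin u * sin v := by
  rw [sin_add (2 * u), sin_two_mul, sin_two_mul, cos_two_mul, cos_two_mul, sin_add]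
  linear_combination (-4 * sin u * cos u) * sin_sq_add_cos_sq v -
    4 * sin v * cos v * sin_sq_add_cos_sq u

theorem sin_pi_mul_div_pos {n x : ℝ} (hx : 0 < x) (hxn : x < n) : 0 < sin (π * x / n) := by
  have hn : 0 < n := hx.trans hxn
  apply sin_pos_of_pos_of_lt_pi (by positivity)
  rw [mul_div_assoc]
  exact mul_lt_of_lt_one_right pi_pos ((div_lt_one hn).2 hxn)

theorem isClockwise_pt (n : ℕ) : IsClockwise n (pt n) := by
  intro i j k hij hjk hkn
  have hij' : (i : ℝ) < j := by exact_mod_cast hij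
  have hjk' : (j : ℝ) < k := by exact_mod_cast hjk
  have hkn' : (k : ℝ) < n := by exact_mod_cast hkn
  have hi : (0 : ℝ) ≤ i := Nat.cast_nonneg i
  set u := π * (j - i) / n
  set v := π * (k - j) / n
  have hcross : cross (pt n i) (pt n j) (pt n k) =
      -(sin (2 * u) + sin (2 * v) - sin (2 * u + 2 * v)) := by
    have hu : 2 * u = 2 * π * j / n - 2 * π * i / n := by ring
    have hv : 2 * v = 2 * π * k / n - 2 * π * j / n := by ring
    have huv : 2 * u + 2 * v = 2 * π * k / n - 2 * π * i / n := by ring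
    rw [huv, hu, hv]
    simp only [pt, cross, sin_sub]
    ring
  have huv : u + v = π * (k - i) / n := by ring
  rw [hcross, sin_two_mul_add_sin_two_mul_sub, huv]
  have h₁ := sin_pi_mul_div_pos (n := n) (x := k - i) (by linarith) (by linarith)
  have h₂ := sin_pi_mul_div_pos (n := n) (x := j - i) (by linarith) (by linarith)
  have h₃ := sin_pi_mul_div_pos (n := n) (x := k - j) (by linarith) (by linarith)
  have := mul_pos (mul_pos h₁ h₂) h₃
  linarith

theorem pt_mod (n x : ℕ) : pt n (x % n) = pt n x := by
  rcases Nat.eq_zero_or_pos n with rfl | hn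
  · rw [Nat.mod_zero]
  have hx : (x : ℝ) = (x % n : ℕ) + n * (x / n : ℕ) := by
    exact_mod_cast (Nat.mod_add_div x n).symm
  have hangle : 2 * π * x / n = 2 * π * (x % n : ℕ) / n + (x / n : ℕ) * (2 * π) := by
    rw [hx]
    field_simp
  simp only [pt, hangle, cos_add_nat_mul_two_pi, sin_add_nat_mul_two_pi]

theorem pt_eq_pt_iff {n a b : ℕ} (hn : 3 ≤ n) : pt n a = pt n b ↔ a % n = b % n := by
  refine ⟨fun h => (isClockwise_pt n).injOn hn ?_ ?_ ?_, fun h => by rw [← pt_mod, h, pt_mod]⟩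
  · simpa using Nat.mod_lt a (by omega)
  · simpa using Nat.mod_lt b (by omega)
  · rw [pt_mod, pt_mod, h]

theorem einter_iff_chordsMeet {n a b c d : ℕ} (hn : 3 ≤ n) (hab : pt n a ≠ pt n b)
    (hcd : pt n c ≠ pt n d) :
    EInter n a b c d ↔ ChordsMeet (a % n) (b % n) (c % n) (d % n) := by
  rw [Ne, pt_eq_pt_iff hn] at hab hcd
  have hmod := fun x => Nat.mod_lt x (by omega : 0 < n)
  rw [← (isClockwise_pt n).segment_inter_nonempty_iff (hmod a) (hmod b) (hmod c) (hmod d) hab hcd]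
  simp only [EInter, pt_mod]

theorem halving_iff {n a b : ℕ} (hn : 3 ≤ n) (hab : pt n a ≠ pt n b) :
    Halving n a b ↔ IsHalvingChord n (a % n) (b % n) := by
  rw [Ne, pt_eq_pt_iff hn] at hab
  have hmod := fun x => Nat.mod_lt x (by omega : 0 < n)
  rw [← (isClockwise_pt n).isHalvingPts_iff hn (hmod a) (hmod b) hab]
  simp only [Halving, ngon, pt_mod]

theorem EInter.symm {n a b c d : ℕ} (h : EInter n a b c d) : EInter n c d a b := by
  rwa [EInter, Set.inter_comm]

theorem IsHalvingChord.chordsMeet {n a b c d : ℕ} (ha : a < n) (hb : b < n) (hc : c < n)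
    (hd : d < n) (h₁ : IsHalvingChord n a b) (h₂ : IsHalvingChord n c d) :
    ChordsMeet a b c d := by
  simp only [IsHalvingChord, ChordsMeet, Set.uIoo, Set.mem_Ioo, Nat.dist] at *
  omega

/-- As `j` and `j'` are consecutive, an edge missing both edges of the pair has both endpoints in
one of the arcs cut out by `i, j, j', k`, so it cannot meet an edge joining two of them. -/
theorem chordsMeet_pair_of_chordsMeet_witness {n i j j' k a b c d : ℕ} (ha : a < n) (hb : b < n)
    (hj' : j + 1 < n ∧ j' = j + 1 ∨ j + 1 = n ∧ j' = 0)
    (hpair : ¬ ChordsMeet i j j' k) (hw : c = i ∧ d = j' ∨ c = i ∧ d = k ∨ c = j ∧ d = k)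
    (h : ChordsMeet a b c d) :
    ChordsMeet a b i j ∨ ChordsMeet a b j' k := by
  simp only [ChordsMeet, Set.uIoo, Set.mem_Ioo] at *
  rcases hw with ⟨rfl, rfl⟩ | ⟨rfl, rfl⟩ | ⟨rfl, rfl⟩ <;> omega

theorem HalvingPair.exists_witness {n i j k : ℕ} (hn : 3 ≤ n) (h : HalvingPair n i j k) :
    ∃ c d, pt n c ≠ pt n d ∧ Halving n c d ∧ ∀ a b, pt n a ≠ pt n b →
      EInter n a b c d → EInter n a b i j ∨ EInter n a b (j + 1) k := by
  obtain ⟨hij, hjk, hpair, hwit⟩ := h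
  have hmod := fun x => Nat.mod_lt x (by omega : 0 < n)
  have hsucc : j % n + 1 < n ∧ (j + 1) % n = j % n + 1 ∨ j % n + 1 = n ∧ (j + 1) % n = 0 := by
    rw [Nat.add_mod_eq_ite, Nat.one_mod_eq_one.2 (by omega)]
    have := hmod j
    split_ifs <;> omega
  rw [einter_iff_chordsMeet hn hij hjk] at hpair
  obtain ⟨c, d, hhalf, hw⟩ : ∃ c d, Halving n c d ∧
      (c = i ∧ d = j + 1 ∨ c = i ∧ d = k ∨ c = j ∧ d = k) := by
    rcases hwit with h | h | h
    exacts [⟨_, _, h, Or.inl ⟨rfl, rfl⟩⟩, ⟨_, _, h, Or.inr (Or.inl ⟨rfl, rfl⟩)⟩,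
      ⟨_, _, h, Or.inr (Or.inr ⟨rfl, rfl⟩)⟩]
  have hw' : c % n = i % n ∧ d % n = (j + 1) % n ∨ c % n = i % n ∧ d % n = k % n ∨
      c % n = j % n ∧ d % n = k % n := by
    rcases hw with ⟨rfl, rfl⟩ | ⟨rfl, rfl⟩ | ⟨rfl, rfl⟩ <;> simp
  have hcd : pt n c ≠ pt n d := by
    rw [Ne, pt_eq_pt_iff hn]
    simp only [ChordsMeet] at hpair
    omega
  refine ⟨c, d, hcd, hhalf, fun a b hab hmeet => ?_⟩
  rw [einter_iff_chordsMeet hn hab hcd] at hmeet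
  rw [einter_iff_chordsMeet hn hab hij, einter_iff_chordsMeet hn hab hjk]
  exact chordsMeet_pair_of_chordsMeet_witness (hmod a) (hmod b) hsucc hpair hw' hmeet

theorem einter_of_halving {n a b c d : ℕ} (hn : 3 ≤ n) (hab : pt n a ≠ pt n b)
    (hcd : pt n c ≠ pt n d) (h₁ : Halving n a b) (h₂ : Halving n c d) : EInter n a b c d := by
  have hmod := fun x => Nat.mod_lt x (by omega : 0 < n)
  rw [halving_iff hn hab] at h₁
  rw [halving_iff hn hcd] at h₂
  rw [einter_iff_chordsMeet hn hab hcd]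
  exact h₁.chordsMeet (hmod a) (hmod b) (hmod c) (hmod d) h₂

/-- In a complete convex geometric graph of order `n`: any halving edge intersects any
halving pair, and any two halving pairs intersect. -/
theorem halving_pairs_intersect (n : ℕ) (hn : 3 ≤ n) :
    (∀ a b i j k : ℕ, pt n a ≠ pt n b → Halving n a b → HalvingPair n i j k →
      EInter n a b i j ∨ EInter n a b (j + 1) k) ∧
    (∀ i j k i' j' k' : ℕ, HalvingPair n i j k → HalvingPair n i' j' k' →
      EInter n i j i' j' ∨ EInter n i j (j' + 1) k' ∨
      EInter n (j + 1) k i' j' ∨ EInter n (j + 1) k (j' + 1) k') := by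
  have edge_meets_pair : ∀ a b i j k : ℕ, pt n a ≠ pt n b → Halving n a b →
      HalvingPair n i j k → EInter n a b i j ∨ EInter n a b (j + 1) k := by
    intro a b i j k hab hh hp
    obtain ⟨c, d, hcd, hhalf, hmeets⟩ := hp.exists_witness hn
    exact hmeets a b hab (einter_of_halving hn hab hcd hh hhalf)
  refine ⟨edge_meets_pair, fun i j k i' j' k' hp hp' => ?_⟩
  obtain ⟨c, d, hcd, hhalf, hmeets⟩ := hp.exists_witness hn
  rcases edge_meets_pair c d i' j' k' hcd hhalf hp' with h | h
  · rcases hmeets i' j' hp'.1 h.symm with g | g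
    exacts [Or.inl g.symm, Or.inr (Or.inr (Or.inl g.symm))]
  · rcases hmeets (j' + 1) k' hp'.2.1 h.symm with g | g
    exacts [Or.inr (Or.inl g.symm), Or.inr (Or.inr (Or.inr g.symm))]
end

section
/- For every graph G with m = sum over v of binom(deg(v),2), the geometric pseudoachromatic index satisfies psi_g(G) ≤ floor((1 + sqrt(1 + 8(m + rcr(G))))/2), where rcr(G) is the rectilinear crossing number of G. -/
open scoped Classical

/-- A geometric embedding of an abstract graph: an injective placement of the vertices in
general position. -/
def IsEmb {V : Type} [Fintype V] (f : V → Pt) : Prop :=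
  Function.Injective f ∧ GenPos (Finset.univ.image f)

/-- The straight-line edges of the embedded graph. -/
noncomputable def geomEdges {V : Type} [Fintype V] [DecidableEq V] (G : SimpleGraph V)
    [DecidableRel G.Adj] (f : V → Pt) : Finset (Sym2 Pt) :=
  G.edgeFinset.image (Sym2.map f)

/-- The rectilinear crossing number of `G`: the minimum number of crossing pairs of edges
over all geometric embeddings. -/
noncomputable def rcr {V : Type} [Fintype V] [DecidableEq V] (G : SimpleGraph V)
    [DecidableRel G.Adj] : ℕ :=
  sInf {m : ℕ | ∃ f : V → Pt, IsEmb f ∧ pairCount (geomEdges G f) Crossing = m}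

/-! Embed `G` with `rcr G` crossings (an embedding exists: put the vertices on a parabola).
In a complete colouring with `k` colours every ordered pair of distinct colours is realised by
an ordered pair of distinct intersecting edges. Such a pair of edges either shares an endpoint,
giving at most `Σ_v deg v (deg v - 1) = 2m` pairs, or crosses, giving `2 rcr G` pairs.
Hence `k (k - 1) ≤ 2 (m + rcr G)`, and solving the quadratic gives the bound. -/

open Finset

noncomputable def orderedPairs (E : Finset (Sym2 Pt)) (P : Sym2 Pt → Sym2 Pt → Prop) :
    Finset (Sym2 Pt × Sym2 Pt) :=
  (E ×ˢ E).filter (fun q => q.1 ≠ q.2 ∧ P q.1 q.2)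

lemma mem_orderedPairs {E : Finset (Sym2 Pt)} {P : Sym2 Pt → Sym2 Pt → Prop}
    {q : Sym2 Pt × Sym2 Pt} :
    q ∈ orderedPairs E P ↔ q.1 ∈ E ∧ q.2 ∈ E ∧ q.1 ≠ q.2 ∧ P q.1 q.2 := by
  simp [orderedPairs, and_assoc]

-- `Prod.swap` is a fixed-point-free involution of the ordered pairs.
lemma even_card_orderedPairs (E : Finset (Sym2 Pt)) {P : Sym2 Pt → Sym2 Pt → Prop}
    (hP : ∀ e f, P e f → P f e) : Even #(orderedPairs E P) := by
  rw [← ZMod.natCast_eq_zero_iff_even, card_eq_sum_ones, Nat.cast_sum, Nat.cast_one]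
  refine sum_involution (fun q _ => q.swap) (fun _ _ => by decide) ?_ ?_ (fun q _ => q.swap_swap)
  · intro q hq _ hswap
    exact (mem_orderedPairs.1 hq).2.2.1 (congrArg Prod.snd hswap)
  · intro q hq
    obtain ⟨h1, h2, hne, hPq⟩ := mem_orderedPairs.1 hq
    exact mem_orderedPairs.2 ⟨h2, h1, hne.symm, hP _ _ hPq⟩

lemma card_orderedPairs_eq_two_mul_pairCount (E : Finset (Sym2 Pt))
    {P : Sym2 Pt → Sym2 Pt → Prop} (hP : ∀ e f, P e f → P f e) :
    #(orderedPairs E P) = 2 * pairCount E P :=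
  (Nat.two_mul_div_two_of_even (even_card_orderedPairs E hP)).symm

lemma Crossing.symm {e f : Sym2 Pt} : Crossing e f → Crossing f e := by
  rintro ⟨⟨x, hxe, hxf⟩, hshare⟩
  exact ⟨⟨x, hxf, hxe⟩, fun ⟨p, hpf, hpe⟩ => hshare ⟨p, hpe, hpf⟩⟩

lemma card_orderedPairs_sInter_le (E : Finset (Sym2 Pt)) :
    #(orderedPairs E SInter) ≤
      #(orderedPairs E ShareEndpoint) + #(orderedPairs E Crossing) := by
  refine (card_le_card fun q hq => ?_).trans (card_union_le _ _)
  obtain ⟨h1, h2, hne, hint⟩ := mem_orderedPairs.1 hq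
  by_cases hshare : ShareEndpoint q.1 q.2
  · exact mem_union_left _ (mem_orderedPairs.2 ⟨h1, h2, hne, hshare⟩)
  · exact mem_union_right _ (mem_orderedPairs.2 ⟨h1, h2, hne, hint, hshare⟩)

-- Each ordered pair of distinct colours is realised by an ordered pair of intersecting edges.
lemma CompleteOn.card_mul_pred_le {E : Finset (Sym2 Pt)} {c : Sym2 Pt → ℕ}
    (hc : CompleteOn E c) :
    #(E.image c) * (#(E.image c) - 1) ≤ #(orderedPairs E SInter) := by
  have hsub : (E.image c).offDiag ⊆ (orderedPairs E SInter).image (Prod.map c c) := by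
    rintro ⟨i, j⟩ hij
    obtain ⟨hi, hj, hne⟩ := mem_offDiag.1 hij
    obtain ⟨e, he, f, hf, rfl, rfl, hint⟩ := hc i hi j hj hne
    exact mem_image.2
      ⟨(e, f), mem_orderedPairs.2 ⟨he, hf, fun h => hne (congrArg c h), hint⟩, rfl⟩
  calc #(E.image c) * (#(E.image c) - 1) = #(E.image c).offDiag := by
        rw [offDiag_card, Nat.mul_sub_one]
    _ ≤ _ := (card_le_card hsub).trans card_image_le

lemma card_orderedPairs_shareEndpoint_geomEdges_le {V : Type} [Fintype V] [DecidableEq V]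
    (G : SimpleGraph V) [DecidableRel G.Adj] {f : V → Pt} (hf : Function.Injective f) :
    #(orderedPairs (geomEdges G f) ShareEndpoint) ≤
      ∑ v : V, G.degree v * (G.degree v - 1) := by
  let incidentPairs := univ.sigma fun v : V => (G.incidenceFinset v).offDiag
  have hsub : orderedPairs (geomEdges G f) ShareEndpoint ⊆
      incidentPairs.image fun x => (Sym2.map f x.2.1, Sym2.map f x.2.2) := by
    rintro ⟨e, g⟩ hq
    obtain ⟨he, hg, hne, p, hpe, hpg⟩ := mem_orderedPairs.1 hq
    obtain ⟨e₀, he₀, rfl⟩ := mem_image.1 he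
    obtain ⟨g₀, hg₀, rfl⟩ := mem_image.1 hg
    obtain ⟨v, hv, rfl⟩ := Sym2.mem_map.1 hpe
    obtain ⟨w, hw, hwv⟩ := Sym2.mem_map.1 hpg
    obtain rfl := hf hwv
    refine mem_image.2
      ⟨⟨w, (e₀, g₀)⟩, mem_sigma.2 ⟨mem_univ _, mem_offDiag.2 ⟨?_, ?_, ?_⟩⟩, rfl⟩
    · exact (G.mem_incidenceFinset _ _).2 ⟨G.mem_edgeFinset.1 he₀, hv⟩
    · exact (G.mem_incidenceFinset _ _).2 ⟨G.mem_edgeFinset.1 hg₀, hw⟩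
    · exact fun h => hne (congrArg (Sym2.map f) h)
  calc _ ≤ #incidentPairs := (card_le_card hsub).trans card_image_le
    _ = ∑ v : V, G.degree v * (G.degree v - 1) := by
      simp only [incidentPairs, card_sigma, offDiag_card, G.card_incidenceFinset_eq_degree,
        Nat.mul_sub_one]

lemma le_floor_of_mul_pred_le {k M : ℕ} (h : k * (k - 1) ≤ 2 * M) :
    k ≤ ⌊(1 + √(1 + 8 * (M : ℝ))) / 2⌋₊ := by
  refine Nat.le_floor ?_
  rcases Nat.eq_zero_or_pos k with rfl | hpos
  · simp only [Nat.cast_zero]; positivity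
  have hreal : (k : ℝ) * (k - 1) ≤ 2 * M := by
    rw [← Nat.cast_pred hpos]; exact_mod_cast h
  have hsqrt : 2 * (k : ℝ) - 1 ≤ √(1 + 8 * (M : ℝ)) :=
    Real.le_sqrt_of_sq_le (by nlinarith)
  linarith

lemma genPos_of_forall_snd_eq_sq {S : Finset Pt} (h : ∀ p ∈ S, p.2 = p.1 ^ 2) : GenPos S := by
  intro p hp q hq r hr hpq hqr hpr hcol
  have fst_ne {x y : Pt} (hx : x ∈ S) (hy : y ∈ S) (hxy : x ≠ y) : x.1 - y.1 ≠ 0 :=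
    fun h0 => hxy (Prod.ext (sub_eq_zero.1 h0) (by rw [h x hx, h y hy, sub_eq_zero.1 h0]))
  obtain ⟨v, hv⟩ := (collinear_iff_of_mem (Set.mem_insert p _)).1 hcol
  obtain ⟨a, ha⟩ := hv q (by simp)
  obtain ⟨b, hb⟩ := hv r (by simp)
  have hdet : (r.1 - q.1) * (q.1 - p.1) * (r.1 - p.1) = 0 := by
    have hq1 : q.1 - p.1 = a * v.1 := by simp [ha]
    have hq2 : q.2 - p.2 = a * v.2 := by simp [ha]
    have hr1 : r.1 - p.1 = b * v.1 := by simp [hb]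
    have hr2 : r.2 - p.2 = b * v.2 := by simp [hb]
    rw [h p hp, h q hq] at hq2
    rw [h p hp, h r hr] at hr2
    linear_combination
      (q.1 - p.1) * hr2 - (r.1 - p.1) * hq2 + b * v.2 * hq1 - a * v.2 * hr1
  exact mul_ne_zero (mul_ne_zero (fst_ne hr hq hqr.symm) (fst_ne hq hp hpq.symm))
    (fst_ne hr hp hpr.symm) hdet

noncomputable def parabolaEmb (V : Type) [Fintype V] (v : V) : Pt :=
  ((Fintype.equivFin V v : ℝ), (Fintype.equivFin V v : ℝ) ^ 2)

lemma isEmb_parabolaEmb (V : Type) [Fintype V] : IsEmb (parabolaEmb V) := by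
  refine ⟨fun v w hvw => (Fintype.equivFin V).injective (Fin.ext ?_), ?_⟩
  · simp only [parabolaEmb, Prod.ext_iff] at hvw
    exact_mod_cast hvw.1
  · refine genPos_of_forall_snd_eq_sq fun p hp => ?_
    obtain ⟨v, -, rfl⟩ := mem_image.1 hp
    rfl

lemma exists_isEmb_pairCount_crossing_eq_rcr {V : Type} [Fintype V] [DecidableEq V]
    (G : SimpleGraph V) [DecidableRel G.Adj] :
    ∃ f : V → Pt, IsEmb f ∧ pairCount (geomEdges G f) Crossing = rcr G :=
  Nat.sInf_mem (s := {m | ∃ f : V → Pt, IsEmb f ∧ pairCount (geomEdges G f) Crossing = m})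
    ⟨_, parabolaEmb V, isEmb_parabolaEmb V, rfl⟩

/-- `ψ_g(G) ≤ ⌊(1 + √(1 + 8(m + rcr(G))))/2⌋` with `m = Σ_v C(deg v, 2)`: some geometric
embedding admits no complete coloring with more colors than this bound. -/
theorem geometric_pseudoachromatic_upper {V : Type} [Fintype V] [DecidableEq V]
    (G : SimpleGraph V) [DecidableRel G.Adj] :
    ∃ f : V → Pt, IsEmb f ∧
      ∀ c : Sym2 Pt → ℕ, CompleteOn (geomEdges G f) c →
        ((geomEdges G f).image c).card ≤
          Nat.floor ((1 + Real.sqrt (1 + 8 *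
            (((∑ v : V, (G.degree v).choose 2) + rcr G : ℕ) : ℝ))) / 2) := by
  obtain ⟨f, hf, hcross⟩ := exists_isEmb_pairCount_crossing_eq_rcr G
  refine ⟨f, hf, fun c hc => le_floor_of_mul_pred_le ?_⟩
  have hdegree (d : ℕ) : d * (d - 1) = 2 * d.choose 2 := by
    rw [Nat.choose_two_right, Nat.two_mul_div_two_of_even (Nat.even_mul_pred_self d)]
  calc _ ≤ #(orderedPairs (geomEdges G f) SInter) := hc.card_mul_pred_le
    _ ≤ #(orderedPairs (geomEdges G f) ShareEndpoint) +
        #(orderedPairs (geomEdges G f) Crossing) := card_orderedPairs_sInter_le _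
    _ ≤ ∑ v : V, G.degree v * (G.degree v - 1) + 2 * rcr G := by
      rw [card_orderedPairs_eq_two_mul_pairCount _ fun _ _ => Crossing.symm, hcross]
      exact Nat.add_le_add_right (card_orderedPairs_shareEndpoint_geomEdges_le G hf.1) _
    _ = 2 * ((∑ v : V, (G.degree v).choose 2) + rcr G) := by
      simp only [hdegree, ← mul_sum, mul_add]
end
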